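/- arXiv:2501.14241 — 8 statements merged into one kernel-verified Lean document; each statement's English description precedes it below -/
import Mathlib

section
/- For every strictly increasing function φ: ℕ → ℕ there exists a continuous family of real ℕ×ℕ matrices Γ(t), t ∈ [0,1], such that Γ(0) is the identity, Γ(1)_{ab} = δ_{a,φ(b)}, Γ(t)_{ab} = 0 whenever a > φ(b), and Γ(t)*Γ(t) = 1 for all t. -/
/-!
Write `c = cos (πt/2)`, `s = sin (πt/2)` and let `G_j` be the rotation by `(c, s)` in the
coordinate plane `(j, φ j)` (the identity when `φ j = j`). Take `Γ(t)` to be the ordered product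
`G_0 G_1 G_2 ⋯`: since `j ≤ φ j`, the factors `G_j` with `j > b` fix `e_b`, so column `b` is the
finite product `G_0 ⋯ G_b e_b`, and any two columns are images of `e_b, e_b'` under one finite
product of rotations, hence orthonormal. Each `G_j` only mixes coordinates `≤ φ j`, which gives
the triangular shape. At `t = 1` the factor `G_b` sends `e_b` to `e_{φ b}`, which the earlier
factors fix because `φ` is injective.
-/

open Finset Real

def planeRotation (i k : ℕ) (c s : ℝ) (v : ℕ → ℝ) : ℕ → ℝ := fun a =>
  if a = i then c * v i - s * v k else if a = k then s * v i + c * v k else v a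

section planeRotation

variable {i k : ℕ} {c s : ℝ} {v : ℕ → ℝ}

lemma planeRotation_apply_of_ne {a : ℕ} (hi : a ≠ i) (hk : a ≠ k) :
    planeRotation i k c s v a = v a := by
  simp [planeRotation, hi, hk]

lemma planeRotation_eq_self (hi : v i = 0) (hk : v k = 0) : planeRotation i k c s v = v := by
  ext a
  unfold planeRotation
  split_ifs with hai hak
  · simp [hai, hi, hk]
  · simp [hak, hi, hk]
  · rfl

lemma planeRotation_one_zero : planeRotation i k 1 0 v = v := by
  ext a
  unfold planeRotation
  split_ifs with hai hak
  · simp [hai]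
  · simp [hak]
  · rfl

lemma planeRotation_zero_one_single (hik : i ≠ k) :
    planeRotation i k 0 1 (Pi.single i 1) = Pi.single k 1 := by
  ext a
  by_cases hai : a = i
  · subst hai; simp [planeRotation, hik]
  · by_cases hak : a = k
    · subst hak; simp [planeRotation, hik.symm]
    · simp [planeRotation, hai, hak]

lemma sum_planeRotation_mul (hik : i ≠ k) {S : Finset ℕ} (hi : i ∈ S) (hk : k ∈ S)
    (hcs : c ^ 2 + s ^ 2 = 1) (w : ℕ → ℝ) :
    ∑ a ∈ S, planeRotation i k c s v a * planeRotation i k c s w a = ∑ a ∈ S, v a * w a := by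
  have hk' : k ∈ S.erase i := mem_erase.2 ⟨hik.symm, hk⟩
  rw [← add_sum_erase S _ hi, ← add_sum_erase S _ hi, ← add_sum_erase _ _ hk',
    ← add_sum_erase _ _ hk']
  have hrest : ∀ a ∈ (S.erase i).erase k,
      planeRotation i k c s v a * planeRotation i k c s w a = v a * w a := by
    intro a ha
    obtain ⟨hak, hai, -⟩ : a ≠ k ∧ a ≠ i ∧ a ∈ S := by simpa using ha
    rw [planeRotation_apply_of_ne hai hak, planeRotation_apply_of_ne hai hak]
  rw [sum_congr rfl hrest]
  simp only [planeRotation, if_true, if_neg hik.symm]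
  linear_combination (v i * w i + v k * w k) * hcs

end planeRotation

lemma Continuous.planeRotation {X : Type*} [TopologicalSpace X] {c s : X → ℝ} {v : X → ℕ → ℝ}
    (hc : Continuous c) (hs : Continuous s) (hv : Continuous v) (i k : ℕ) :
    Continuous fun x => planeRotation i k (c x) (s x) (v x) := by
  refine continuous_pi fun a => ?_
  have hva : ∀ b, Continuous fun x => v x b := fun b => (continuous_apply b).comp hv
  unfold _root_.planeRotation
  split_ifs
  · exact (hc.mul (hva i)).sub (hs.mul (hva k))
  · exact (hs.mul (hva i)).add (hc.mul (hva k))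
  · exact hva a

def shiftRotation (φ : ℕ → ℕ) (c s : ℝ) (j : ℕ) (v : ℕ → ℝ) : ℕ → ℝ :=
  if φ j = j then v else planeRotation j (φ j) c s v

def shiftRotationProd (φ : ℕ → ℕ) (c s : ℝ) : ℕ → (ℕ → ℝ) → ℕ → ℝ
  | 0, v => v
  | n + 1, v => shiftRotationProd φ c s n (shiftRotation φ c s n v)

section shiftRotation

variable {φ : ℕ → ℕ} {c s : ℝ}

lemma shiftRotation_eq_self {j : ℕ} {v : ℕ → ℝ} (hj : v j = 0) (hφj : v (φ j) = 0) :
    shiftRotation φ c s j v = v := by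
  unfold shiftRotation
  split_ifs
  · rfl
  · exact planeRotation_eq_self hj hφj

lemma shiftRotation_one_zero (j : ℕ) (v : ℕ → ℝ) : shiftRotation φ 1 0 j v = v := by
  unfold shiftRotation
  split_ifs
  · rfl
  · exact planeRotation_one_zero

lemma shiftRotation_zero_one_single (j : ℕ) :
    shiftRotation φ 0 1 j (Pi.single j 1) = Pi.single (φ j) 1 := by
  unfold shiftRotation
  split_ifs with h
  · rw [h]
  · exact planeRotation_zero_one_single (Ne.symm h)

lemma shiftRotation_apply_eq_zero {j m : ℕ} {v : ℕ → ℝ} (hj : j ≤ m) (hφj : φ j ≤ m)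
    (hv : ∀ a, m < a → v a = 0) (a : ℕ) (ha : m < a) : shiftRotation φ c s j v a = 0 := by
  unfold shiftRotation
  split_ifs
  · exact hv a ha
  · rw [planeRotation_apply_of_ne (by omega) (by omega), hv a ha]

lemma sum_shiftRotation_mul {j : ℕ} {S : Finset ℕ} (hj : j ∈ S) (hφj : φ j ∈ S)
    (hcs : c ^ 2 + s ^ 2 = 1) (v w : ℕ → ℝ) :
    ∑ a ∈ S, shiftRotation φ c s j v a * shiftRotation φ c s j w a = ∑ a ∈ S, v a * w a := by
  unfold shiftRotation
  split_ifs with h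
  · rfl
  · exact sum_planeRotation_mul (Ne.symm h) hj hφj hcs w

lemma Continuous.shiftRotation {X : Type*} [TopologicalSpace X] {c s : X → ℝ}
    {v : X → ℕ → ℝ} (hc : Continuous c) (hs : Continuous s) (hv : Continuous v) (j : ℕ) :
    Continuous fun x => _root_.shiftRotation φ (c x) (s x) j (v x) := by
  unfold _root_.shiftRotation
  split_ifs
  · exact hv
  · exact hc.planeRotation hs hv j (φ j)

lemma shiftRotationProd_one_zero (n : ℕ) (v : ℕ → ℝ) : shiftRotationProd φ 1 0 n v = v := by
  induction n generalizing v with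
  | zero => rfl
  | succ n ih => rw [shiftRotationProd, shiftRotation_one_zero, ih]

lemma shiftRotationProd_eq_self {n : ℕ} {v : ℕ → ℝ} (h : ∀ j < n, v j = 0 ∧ v (φ j) = 0) :
    shiftRotationProd φ c s n v = v := by
  induction n with
  | zero => rfl
  | succ n ih =>
    obtain ⟨hn, hφn⟩ := h n n.lt_succ_self
    rw [shiftRotationProd, shiftRotation_eq_self hn hφn, ih fun j hj => h j (by omega)]

lemma shiftRotationProd_apply_eq_zero {n m : ℕ} {v : ℕ → ℝ} (h : ∀ j < n, j ≤ m ∧ φ j ≤ m)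
    (hv : ∀ a, m < a → v a = 0) (a : ℕ) (ha : m < a) : shiftRotationProd φ c s n v a = 0 := by
  induction n generalizing v with
  | zero => exact hv a ha
  | succ n ih =>
    obtain ⟨hn, hφn⟩ := h n n.lt_succ_self
    exact ih (fun j hj => h j (by omega)) (shiftRotation_apply_eq_zero hn hφn hv)

lemma sum_shiftRotationProd_mul {n : ℕ} {S : Finset ℕ} (h : ∀ j < n, j ∈ S ∧ φ j ∈ S)
    (hcs : c ^ 2 + s ^ 2 = 1) (v w : ℕ → ℝ) :
    ∑ a ∈ S, shiftRotationProd φ c s n v a * shiftRotationProd φ c s n w a =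
      ∑ a ∈ S, v a * w a := by
  induction n generalizing v w with
  | zero => rfl
  | succ n ih =>
    obtain ⟨hn, hφn⟩ := h n n.lt_succ_self
    rw [shiftRotationProd, shiftRotationProd, ih (fun j hj => h j (by omega)),
      sum_shiftRotation_mul hn hφn hcs]

lemma Continuous.shiftRotationProd {X : Type*} [TopologicalSpace X] {c s : X → ℝ}
    {v : X → ℕ → ℝ} (hc : Continuous c) (hs : Continuous s) (hv : Continuous v) (n : ℕ) :
    Continuous fun x => _root_.shiftRotationProd φ (c x) (s x) n (v x) := by
  induction n generalizing v with
  | zero => exact hv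
  | succ n ih => exact ih (hc.shiftRotation hs hv n)

end shiftRotation

def shiftColumn (φ : ℕ → ℕ) (c s : ℝ) (b : ℕ) : ℕ → ℝ :=
  shiftRotationProd φ c s (b + 1) (Pi.single b 1)

section shiftColumn

variable {φ : ℕ → ℕ} {c s : ℝ}

lemma shiftRotationProd_single_of_lt (hφ : StrictMono φ) {b n : ℕ} (hbn : b < n) :
    shiftRotationProd φ c s n (Pi.single b 1) = shiftColumn φ c s b := by
  induction n, hbn using Nat.le_induction with
  | base => rfl
  | succ n hbn ih =>
    have hφn : n ≤ φ n := hφ.le_apply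
    rw [shiftRotationProd, shiftRotation_eq_self (Pi.single_eq_of_ne (by omega) _)
      (Pi.single_eq_of_ne (by omega) _), ih]

lemma shiftColumn_apply_eq_zero (hφ : StrictMono φ) {a b : ℕ} (hab : φ b < a) :
    shiftColumn φ c s b a = 0 := by
  refine shiftRotationProd_apply_eq_zero (fun j hj => ⟨?_, hφ.monotone (by omega)⟩) ?_ a hab
  · exact (Nat.le_of_lt_succ hj).trans hφ.le_apply
  · intro a' ha'
    exact Pi.single_eq_of_ne (hφ.le_apply.trans_lt ha').ne' _

lemma hasSum_shiftColumn_mul (hφ : StrictMono φ) (hcs : c ^ 2 + s ^ 2 = 1) (b b' : ℕ) :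
    HasSum (fun a => shiftColumn φ c s b' a * shiftColumn φ c s b a)
      (if b' = b then 1 else 0) := by
  set n := max b b' + 1
  have hS : ∀ j < n, j ∈ range (φ n) ∧ φ j ∈ range (φ n) := fun j hj =>
    ⟨mem_range.2 (hj.trans_le hφ.le_apply), mem_range.2 (hφ hj)⟩
  have hsum : ∑ a ∈ range (φ n), shiftColumn φ c s b' a * shiftColumn φ c s b a =
      if b' = b then 1 else 0 := by
    rw [← shiftRotationProd_single_of_lt hφ (show b < n by omega),
      ← shiftRotationProd_single_of_lt hφ (show b' < n by omega),
      sum_shiftRotationProd_mul hS hcs]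
    simp [Pi.single_apply, eq_comm, show b < φ n from (by omega : b < n).trans_le hφ.le_apply]
  rw [← hsum]
  refine hasSum_sum_of_ne_finset_zero fun a ha => ?_
  have hφb : φ b < φ n := hφ (by omega)
  rw [shiftColumn_apply_eq_zero hφ (hφb.trans_le (by simpa using ha)), mul_zero]

lemma shiftColumn_one_zero (b : ℕ) : shiftColumn φ 1 0 b = Pi.single b 1 :=
  shiftRotationProd_one_zero _ _

lemma shiftColumn_zero_one (hφ : StrictMono φ) (b : ℕ) :
    shiftColumn φ 0 1 b = Pi.single (φ b) 1 := by
  rw [shiftColumn, shiftRotationProd, shiftRotation_zero_one_single]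
  refine shiftRotationProd_eq_self fun j hj => ⟨Pi.single_eq_of_ne ?_ _, Pi.single_eq_of_ne ?_ _⟩
  · exact (hj.trans_le hφ.le_apply).ne
  · exact (hφ hj).ne

lemma Continuous.shiftColumn {X : Type*} [TopologicalSpace X] {c s : X → ℝ}
    (hc : Continuous c) (hs : Continuous s) (b : ℕ) :
    Continuous fun x => _root_.shiftColumn φ (c x) (s x) b :=
  hc.shiftRotationProd hs continuous_const (b + 1)

end shiftColumn

/-- For every strictly increasing `φ : ℕ → ℕ` there is a continuous family of
real ℕ×ℕ matrices `Γ(t)`, `t ∈ [0,1]`, with `Γ(0) = 1`, `Γ(1)_{ab} = δ_{a, φ(b)}`,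
`Γ(t)_{ab} = 0` for `a > φ(b)`, and `Γ(t)* Γ(t) = 1` for all `t ∈ [0,1]`. -/
theorem stmt_2 (φ : ℕ → ℕ) (hφ : StrictMono φ) :
    ∃ Γ : ℝ → ℕ → ℕ → ℝ,
      (∀ a b, ContinuousOn (fun t => Γ t a b) (Set.Icc (0 : ℝ) 1)) ∧
      (∀ a b, Γ 0 a b = if a = b then 1 else 0) ∧
      (∀ a b, Γ 1 a b = if a = φ b then 1 else 0) ∧
      (∀ t ∈ Set.Icc (0 : ℝ) 1, ∀ a b, φ b < a → Γ t a b = 0) ∧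
      (∀ t ∈ Set.Icc (0 : ℝ) 1, ∀ b b',
        HasSum (fun a => Γ t a b' * Γ t a b) (if b' = b then 1 else 0)) := by
  refine ⟨fun t a b => shiftColumn φ (cos (π / 2 * t)) (sin (π / 2 * t)) b a,
    fun a b => ?_, fun a b => ?_, fun a b => ?_,
    fun t _ a b hab => shiftColumn_apply_eq_zero hφ hab,
    fun t _ b b' => hasSum_shiftColumn_mul hφ (cos_sq_add_sin_sq _) b b'⟩
  · have hθ : Continuous fun t : ℝ => π / 2 * t := continuous_const.mul continuous_id
    exact ((continuous_apply a).comp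
      ((continuous_cos.comp hθ).shiftColumn (continuous_sin.comp hθ) b)).continuousOn
  · simp [shiftColumn_one_zero, Pi.single_apply]
  · simp [shiftColumn_zero_one hφ, Pi.single_apply]
end

section
/- Let A be a positive semidefinite D×D complex matrix, let Q₀ be the orthogonal projection onto the range of a positive semidefinite matrix L₀, and let λ₀ > 0 be the smallest nonzero eigenvalue of L₀. Then for any positive semidefinite L with orthogonal projection Q onto its range, and for every x in the range of L₀ with ‖x‖ ≤ 1, one has ‖Q Q₀ x − Q₀ x‖ ≤ 2 λ₀^{-1} ‖L − L₀‖. -/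
/-!
Write `x = L₀ y` with `y` orthogonal to `ker L₀`; in an eigenbasis of `L₀` this gives
`‖y‖ ≤ λ₀⁻¹ ‖x‖`. Since `Q₀` fixes the range of `L₀` and `Q` fixes the range of `L`,
`(Q Q₀ - Q₀) L₀ = (L - L₀) - Q (L - L₀)`, and `‖Q‖ ≤ 1` bounds the right side applied to `y`
by `2 ‖L - L₀‖ ‖y‖`.
-/

open Matrix ComplexOrder

namespace OrthonormalBasis

variable {𝕜 E ι : Type*} [RCLike 𝕜] [NormedAddCommGroup E] [InnerProductSpace 𝕜 E] [Fintype ι]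
  (b : OrthonormalBasis ι 𝕜 E) {T : E →ₗ[𝕜] E} {μ : ι → 𝕜}

theorem repr_apply_of_apply_eq_smul (hT : ∀ i, T (b i) = μ i • b i) (v : E) (i : ι) :
    b.repr (T v) i = μ i * b.repr v i := by
  classical
  conv_lhs => rw [← b.sum_repr v]
  simp [hT, smul_smul, b.repr_self, Pi.single_apply, mul_comm]

theorem exists_apply_eq_and_norm_le (hT : ∀ i, T (b i) = μ i • b i) {c : ℝ} (hc : 0 < c)
    (hμ : ∀ i, μ i ≠ 0 → c ≤ ‖μ i‖) {x : E} (hx : x ∈ LinearMap.range T) :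
    ∃ y, T y = x ∧ ‖y‖ ≤ c⁻¹ * ‖x‖ := by
  obtain ⟨z, rfl⟩ := hx
  -- drop the components of `z` along the kernel of `T`
  let y := b.repr.symm (WithLp.toLp 2 fun i => if μ i = 0 then 0 else b.repr z i)
  have hy : ∀ i, b.repr y i = if μ i = 0 then 0 else b.repr z i := by simp [y]
  refine ⟨y, b.repr.injective ?_, ?_⟩
  · ext i
    simp only [b.repr_apply_of_apply_eq_smul hT, hy]
    split_ifs with h <;> simp [h]
  · rw [le_inv_mul_iff₀ hc, ← b.repr.norm_map y, ← b.repr.norm_map (T z)]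
    refine le_of_sq_le_sq ?_ (norm_nonneg _)
    simp only [mul_pow, EuclideanSpace.norm_sq_eq, Finset.mul_sum, b.repr_apply_of_apply_eq_smul hT,
      hy, norm_mul]
    refine Finset.sum_le_sum fun i _ => ?_
    split_ifs with h
    · rw [norm_zero, zero_pow two_ne_zero, mul_zero]
      positivity
    · gcongr
      exact hμ i h

end OrthonormalBasis

theorem Matrix.IsHermitian.toEuclideanLin_eigenvectorBasis {𝕜 n : Type*} [RCLike 𝕜] [Fintype n]
    [DecidableEq n] {A : Matrix n n 𝕜} (hA : A.IsHermitian) (i : n) :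
    toEuclideanLin A (hA.eigenvectorBasis i) = (hA.eigenvalues i : 𝕜) • hA.eigenvectorBasis i := by
  rw [toLpLin_apply, hA.mulVec_eigenvectorBasis, RCLike.real_smul_eq_coe_smul (K := 𝕜)]
  rfl

theorem Matrix.mul_eq_self_of_range_le {R m n : Type*} [CommSemiring R] [Fintype m] [Fintype n]
    {M : Matrix m n R} {N : Matrix m m R} (hN : IsIdempotentElem N)
    (h : LinearMap.range M.mulVecLin ≤ LinearMap.range N.mulVecLin) : N * M = M := by
  refine ext_iff_mulVec.2 fun v => ?_
  obtain ⟨w, hw⟩ := h ⟨v, rfl⟩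
  rw [mulVecLin_apply, mulVecLin_apply] at hw
  rw [← mulVec_mulVec, ← hw, mulVec_mulVec, hN.eq]

theorem stmt_4_general (D : ℕ) (L₀ L Q₀ Q : Matrix (Fin D) (Fin D) ℂ)
    (hL₀ : L₀.PosSemidef)
    (hQ₀idem : Q₀ * Q₀ = Q₀)
    (hQ₀range : LinearMap.range Q₀.mulVecLin = LinearMap.range L₀.mulVecLin)
    (hQherm : Qᴴ = Q) (hQidem : Q * Q = Q)
    (hQrange : LinearMap.range Q.mulVecLin = LinearMap.range L.mulVecLin)
    (l₀ : ℝ) (hl₀pos : 0 < l₀)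
    (hl₀min : ∀ i, hL₀.1.eigenvalues i ≠ 0 → l₀ ≤ hL₀.1.eigenvalues i)
    (x : EuclideanSpace ℂ (Fin D))
    (hx : x ∈ LinearMap.range (Matrix.toEuclideanLin L₀)) (hxnorm : ‖x‖ ≤ 1) :
    ‖Matrix.toEuclideanCLM (𝕜 := ℂ) (Q * Q₀) x - Matrix.toEuclideanCLM (𝕜 := ℂ) Q₀ x‖
      ≤ 2 * l₀⁻¹ * ‖Matrix.toEuclideanCLM (𝕜 := ℂ) (L - L₀)‖ := by
  set f := Matrix.toEuclideanCLM (𝕜 := ℂ) (n := Fin D)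
  have hl₀norm (i) (hi : (hL₀.1.eigenvalues i : ℂ) ≠ 0) : l₀ ≤ ‖(hL₀.1.eigenvalues i : ℂ)‖ := by
    rw [Complex.norm_real, Real.norm_eq_abs]
    exact (hl₀min i (mod_cast hi)).trans (le_abs_self _)
  obtain ⟨y, rfl, hy⟩ := hL₀.1.eigenvectorBasis.exists_apply_eq_and_norm_le
    hL₀.1.toEuclideanLin_eigenvectorBasis hl₀pos hl₀norm hx
  replace hy : ‖y‖ ≤ l₀⁻¹ := hy.trans (mul_le_of_le_one_right (by positivity) hxnorm)
  have hQ₀L₀ : Q₀ * L₀ = L₀ := mul_eq_self_of_range_le hQ₀idem hQ₀range.ge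
  have hQL : Q * L = L := mul_eq_self_of_range_le hQidem hQrange.ge
  have hP : IsStarProjection (f Q) := IsStarProjection.map ⟨hQidem, hQherm⟩ f
  have hfactor : (Q * Q₀ - Q₀) * L₀ = (L - L₀) - Q * (L - L₀) := by
    rw [sub_mul, mul_assoc, hQ₀L₀, mul_sub Q, hQL]
    abel
  set v := f (L - L₀) y
  calc ‖f (Q * Q₀) (f L₀ y) - f Q₀ (f L₀ y)‖ = ‖v - f Q v‖ := by
        simpa [v] using congr(‖f $hfactor y‖)
    _ ≤ ‖v‖ + ‖f Q v‖ := norm_sub_le _ _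
    _ ≤ 2 * ‖v‖ := by linarith [(f Q).le_of_opNorm_le hP.norm_le v]
    _ ≤ 2 * (‖f (L - L₀)‖ * l₀⁻¹) := by
        gcongr
        exact (f (L - L₀)).le_of_opNorm_le_of_le le_rfl hy
    _ = 2 * l₀⁻¹ * ‖f (L - L₀)‖ := by ring

/-- If `Q₀` is the orthogonal projection onto the range of the positive semidefinite
matrix `L₀`, `λ₀ > 0` is the smallest nonzero eigenvalue of `L₀`, and `Q` is the orthogonal
projection onto the range of a positive semidefinite `L`, then for every `x` in the range of `L₀`
with `‖x‖ ≤ 1` one has `‖Q Q₀ x − Q₀ x‖ ≤ 2 λ₀⁻¹ ‖L − L₀‖`. -/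
theorem stmt_4 (D : ℕ) (L₀ L Q₀ Q : Matrix (Fin D) (Fin D) ℂ)
    (hL₀ : L₀.PosSemidef) (hL : L.PosSemidef)
    (hQ₀herm : Q₀ᴴ = Q₀) (hQ₀idem : Q₀ * Q₀ = Q₀)
    (hQ₀range : LinearMap.range Q₀.mulVecLin = LinearMap.range L₀.mulVecLin)
    (hQherm : Qᴴ = Q) (hQidem : Q * Q = Q)
    (hQrange : LinearMap.range Q.mulVecLin = LinearMap.range L.mulVecLin)
    (l₀ : ℝ) (hl₀pos : 0 < l₀)
    (hl₀mem : ∃ i, hL₀.1.eigenvalues i = l₀)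
    (hl₀min : ∀ i, hL₀.1.eigenvalues i ≠ 0 → l₀ ≤ hL₀.1.eigenvalues i)
    (x : EuclideanSpace ℂ (Fin D))
    (hx : x ∈ LinearMap.range (Matrix.toEuclideanLin L₀)) (hxnorm : ‖x‖ ≤ 1) :
    ‖Matrix.toEuclideanCLM (𝕜 := ℂ) (Q * Q₀) x - Matrix.toEuclideanCLM (𝕜 := ℂ) Q₀ x‖
      ≤ 2 * l₀⁻¹ * ‖Matrix.toEuclideanCLM (𝕜 := ℂ) (L - L₀)‖ :=
  stmt_4_general D L₀ L Q₀ Q hL₀ hQ₀idem hQ₀range hQherm hQidem hQrange l₀ hl₀pos hl₀min x hx hxnorm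
end

section
/- Let E: M_χ(ℂ) → M_χ(ℂ) be the completely positive map E(B) = Σ_{i=1}^d (K^i)* B K^i, where K^1,...,K^d span M_χ(ℂ) and Σ_i K^i (K^i)* = 1. If A is a D×D matrix of block form A^i = X · [[K^i, 0],[M^i, 0]] · X* with X unitary, and B ∈ M_D(ℂ) satisfies Σ_i (A^i)* B A^i = B, then X* B X has the block form [[B', 0],[0, 0]] with Σ_i (K^i)* B' K^i = B'. -/
/-!
Write `F i = [[K i, 0], [M i, 0]]` and `C = X* B X`; conjugating by the unitary `X` turns `B` into
a fixed point `C` of `C ↦ Σ_i (F i)* C F i`. Since `F i = V i P` with `V i = [[K i], [M i]]` and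
`P = [1, 0]`, every value of that map has the form `P* T P = [[T, 0], [0, 0]]`, so the fixed point
`C` does too, with `T = Σ_i (V i)* C V i`. Substituting `C = P* T P` back and using `P V i = K i`
shows that `T` is a fixed point of the transfer map of `K`.
-/

open Matrix

section TransferMap

variable {ι n p : Type*} [Fintype ι] [Fintype n] {R : Type*} [Semiring R] [StarRing R]

def transferMap (A : ι → Matrix n p R) (B : Matrix n n R) : Matrix p p R :=
  ∑ i, (A i)ᴴ * B * A i

theorem transferMap_mul_right {q : Type*} [Fintype p] (A : ι → Matrix n p R) (P : Matrix p q R)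
    (B : Matrix n n R) :
    transferMap (fun i => A i * P) B = Pᴴ * transferMap A B * P := by
  rw [transferMap, transferMap, Matrix.mul_sum, Matrix.sum_mul]
  simp only [conjTranspose_mul, Matrix.mul_assoc]

theorem transferMap_mul_left {m : Type*} [Fintype m] (A : ι → Matrix n p R) (P : Matrix m n R)
    (B : Matrix m m R) :
    transferMap (fun i => P * A i) B = transferMap A (Pᴴ * B * P) := by
  simp only [transferMap, conjTranspose_mul, Matrix.mul_assoc]

end TransferMap

theorem transferMap_eq_self_of_conj_unitary {ι n : Type*} [Fintype ι] [Fintype n] [DecidableEq n]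
    {R : Type*} [CommRing R] [StarRing R] (F : ι → Matrix n n R) {X : Matrix n n R}
    (hX : X ∈ unitaryGroup n R) {B : Matrix n n R}
    (hB : transferMap (fun i => X * F i * Xᴴ) B = B) :
    transferMap F (Xᴴ * B * X) = Xᴴ * B * X := by
  rw [transferMap_mul_right (fun i => X * F i), transferMap_mul_left,
    conjTranspose_conjTranspose] at hB
  have hXX : Xᴴ * X = 1 := hX.1
  conv_rhs => rw [← hB]
  simp only [← Matrix.mul_assoc, hXX, Matrix.one_mul]
  simp only [Matrix.mul_assoc, hXX, Matrix.mul_one]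

section Blocks

variable {l m n : Type*} [Fintype n] [DecidableEq n] {R : Type*} [Semiring R]

theorem fromBlocks_zero_zero_eq_fromRows_mul (K : Matrix l n R) (M : Matrix m n R) :
    fromBlocks K 0 M 0 = fromRows K M * fromCols (1 : Matrix n n R) (0 : Matrix n m R) := by
  rw [fromRows_mul_fromCols, Matrix.mul_one, Matrix.mul_one, Matrix.mul_zero, Matrix.mul_zero]

theorem fromCols_one_zero_mul_fromRows [Fintype m] (K : Matrix n l R) (M : Matrix m l R) :
    fromCols (1 : Matrix n n R) (0 : Matrix n m R) * fromRows K M = K := by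
  rw [fromCols_mul_fromRows, Matrix.one_mul, Matrix.zero_mul, add_zero]

theorem conjTranspose_fromCols_one_zero_mul_mul [StarRing R] (T : Matrix n n R) :
    (fromCols (1 : Matrix n n R) (0 : Matrix n m R))ᴴ * T * fromCols 1 (0 : Matrix n m R) =
      fromBlocks T 0 0 0 := by
  rw [conjTranspose_fromCols_eq_fromRows_conjTranspose, fromRows_mul, fromRows_mul_fromCols]
  simp only [conjTranspose_one, conjTranspose_zero, Matrix.one_mul, Matrix.zero_mul,
    Matrix.mul_one, Matrix.mul_zero]

end Blocks

theorem stmt_7_general (d χ m : ℕ)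
    (K : Fin d → Matrix (Fin χ) (Fin χ) ℂ)
    (M : Fin d → Matrix (Fin m) (Fin χ) ℂ)
    (X : Matrix (Fin χ ⊕ Fin m) (Fin χ ⊕ Fin m) ℂ)
    (hX : X ∈ Matrix.unitaryGroup (Fin χ ⊕ Fin m) ℂ)
    (A : Fin d → Matrix (Fin χ ⊕ Fin m) (Fin χ ⊕ Fin m) ℂ)
    (hA : ∀ i, A i = X * Matrix.fromBlocks (K i) 0 (M i) 0 * Xᴴ)
    (B : Matrix (Fin χ ⊕ Fin m) (Fin χ ⊕ Fin m) ℂ)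
    (hB : ∑ i, (A i)ᴴ * B * A i = B) :
    ∃ B' : Matrix (Fin χ) (Fin χ) ℂ,
      Xᴴ * B * X = Matrix.fromBlocks B' 0 0 0 ∧ ∑ i, (K i)ᴴ * B' * K i = B' := by
  set P : Matrix (Fin χ) (Fin χ ⊕ Fin m) ℂ := fromCols 1 0
  set V := fun i => fromRows (K i) (M i)
  have hF : ∀ i, fromBlocks (K i) 0 (M i) 0 = V i * P := fun i =>
    fromBlocks_zero_zero_eq_fromRows_mul (K i) (M i)
  have hC : transferMap (fun i => V i * P) (Xᴴ * B * X) = Xᴴ * B * X := by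
    simp only [← hF]
    refine transferMap_eq_self_of_conj_unitary _ hX ?_
    rw [show (fun i => X * fromBlocks (K i) 0 (M i) 0 * Xᴴ) = A from funext fun i => (hA i).symm]
    exact hB
  set B' := transferMap V (Xᴴ * B * X)
  have hblock : Xᴴ * B * X = Pᴴ * B' * P := by
    rw [← hC, transferMap_mul_right]
  refine ⟨B', hblock.trans (conjTranspose_fromCols_one_zero_mul_mul B'), ?_⟩
  calc ∑ i, (K i)ᴴ * B' * K i = transferMap (fun i => P * V i) B' := by
        simp only [transferMap, P, V, fromCols_one_zero_mul_fromRows]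
    _ = B' := by rw [transferMap_mul_left, ← hblock]

/-- For `A^i = X [[K^i, 0],[M^i, 0]] X*` with `X` unitary and `K` a
right-normalized injective MPS tensor, any fixed point `B` of `B ↦ Σ_i (A^i)* B A^i` has
`X* B X` of block form `[[B', 0],[0,0]]` with `Σ_i (K^i)* B' K^i = B'`. -/
theorem stmt_7 (d χ m : ℕ)
    (K : Fin d → Matrix (Fin χ) (Fin χ) ℂ)
    (hspan : Submodule.span ℂ (Set.range K) = ⊤)
    (hnorm : ∑ i, K i * (K i)ᴴ = 1)
    (M : Fin d → Matrix (Fin m) (Fin χ) ℂ)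
    (X : Matrix (Fin χ ⊕ Fin m) (Fin χ ⊕ Fin m) ℂ)
    (hX : X ∈ Matrix.unitaryGroup (Fin χ ⊕ Fin m) ℂ)
    (A : Fin d → Matrix (Fin χ ⊕ Fin m) (Fin χ ⊕ Fin m) ℂ)
    (hA : ∀ i, A i = X * Matrix.fromBlocks (K i) 0 (M i) 0 * Xᴴ)
    (B : Matrix (Fin χ ⊕ Fin m) (Fin χ ⊕ Fin m) ℂ)
    (hB : ∑ i, (A i)ᴴ * B * A i = B) :
    ∃ B' : Matrix (Fin χ) (Fin χ) ℂ,
      Xᴴ * B * X = Matrix.fromBlocks B' 0 0 0 ∧ ∑ i, (K i)ᴴ * B' * K i = B' :=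
  stmt_7_general d χ m K M X hX A hA B hB
end

section
/- Let K^1,...,K^d span M_χ(ℂ), let δ ≥ 0 and t ∈ [0,1], and suppose f := f_{t,δ}(L(K)) is a nonzero positive semidefinite matrix (where L(K) = Σ_i (K^i)* K^i). Then R := Σ_i K^i f² (K^i)* is positive definite (invertible). -/
/-!
Write `R = Σᵢ Bᵢᴴ Bᵢ` with `Bᵢ = f (Kⁱ)ᴴ`, using that `f` is Hermitian. Then `R` is positive
semidefinite, and `xᴴ R x = Σᵢ ‖Bᵢ x‖² = 0` forces `xᴴ Kⁱ f = 0` for every `i`. Since the `Kⁱ`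
span all matrices, `xᴴ M f = 0` for every matrix `M`; if `x ≠ 0` then `xᴴ M` ranges over all row
vectors, so `f = 0`.
-/

open Matrix ComplexOrder

namespace Matrix

theorem posDef_sum_conjTranspose_mul_self {ι m n 𝕜 : Type*} [Fintype ι] [Fintype m] [Fintype n]
    [RCLike 𝕜] {B : ι → Matrix m n 𝕜} (hB : ∀ x, (∀ i, B i *ᵥ x = 0) → x = 0) :
    (∑ i, (B i)ᴴ * B i).PosDef := by
  refine posDef_iff_dotProduct_mulVec.mpr
    ⟨isSelfAdjoint_sum _ fun i _ => (isHermitian_conjTranspose_mul_self (B i)).isSelfAdjoint,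
      fun x hx => ?_⟩
  have hquad : star x ⬝ᵥ (∑ i, (B i)ᴴ * B i) *ᵥ x = ∑ i, star (B i *ᵥ x) ⬝ᵥ (B i *ᵥ x) := by
    simp only [sum_mulVec, dotProduct_sum, ← mulVec_mulVec, dotProduct_mulVec, star_mulVec]
  have hnonneg : ∀ i ∈ Finset.univ, 0 ≤ star (B i *ᵥ x) ⬝ᵥ (B i *ᵥ x) :=
    fun i _ => dotProduct_star_self_nonneg _
  rw [hquad]
  refine (Finset.sum_nonneg hnonneg).lt_of_ne fun hzero => hx (hB x fun i => ?_)
  exact dotProduct_star_self_eq_zero.mp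
    ((Finset.sum_eq_zero_iff_of_nonneg hnonneg).mp hzero.symm i (Finset.mem_univ i))

theorem eq_zero_of_vecMul_mul_eq_zero_of_span_eq_top {ι m n R : Type*} [Fintype n]
    [DecidableEq n] [Field R] {K : ι → Matrix n n R}
    (hspan : Submodule.span R (Set.range K) = ⊤) {v : n → R} (hv : v ≠ 0) {A : Matrix n m R}
    (hKA : ∀ i, v ᵥ* (K i * A) = 0) : A = 0 := by
  let φ : Matrix n n R →ₗ[R] m → R :=
    { toFun := fun M => v ᵥ* (M * A)
      map_add' := fun M N => by rw [Matrix.add_mul, vecMul_add]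
      map_smul' := fun c M => by rw [Matrix.smul_mul, vecMul_smul, RingHom.id_apply] }
  have hφ : φ = 0 := LinearMap.ext_on_range hspan fun i => hKA i
  obtain ⟨j, hj⟩ : ∃ j, v j ≠ 0 := Function.ne_iff.mp hv
  ext k l
  have hjkl : v j * A k l = 0 := by
    simpa [φ, single_mul_eq_updateRow_zero, vecMul, dotProduct, updateRow_apply] using
      congrFun (LinearMap.congr_fun hφ (single j k 1)) l
  exact (mul_eq_zero.mp hjkl).resolve_left hj

theorem posDef_sum_mul_mul_conjTranspose_of_span_eq_top {ι n 𝕜 : Type*} [Fintype ι]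
    [Fintype n] [DecidableEq n] [RCLike 𝕜] {K : ι → Matrix n n 𝕜}
    (hspan : Submodule.span 𝕜 (Set.range K) = ⊤) {A : Matrix n n 𝕜} (hA : A ≠ 0) :
    (∑ i, K i * (A * Aᴴ) * (K i)ᴴ).PosDef := by
  have hterm : ∀ i, K i * (A * Aᴴ) * (K i)ᴴ = (Aᴴ * (K i)ᴴ)ᴴ * (Aᴴ * (K i)ᴴ) := fun i => by
    simp only [conjTranspose_mul, conjTranspose_conjTranspose, Matrix.mul_assoc]
  simp only [hterm]
  refine posDef_sum_conjTranspose_mul_self fun x hx => ?_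
  by_contra hx0
  refine hA (eq_zero_of_vecMul_mul_eq_zero_of_span_eq_top hspan (star_ne_zero.mpr hx0) fun i => ?_)
  simpa [star_mulVec] using congrArg star (hx i)

end Matrix

theorem stmt_10_general (d χ : ℕ) (K : Fin d → Matrix (Fin χ) (Fin χ) ℂ)
    (hspan : Submodule.span ℂ (Set.range K) = ⊤)
    (t δ : ℝ)
    (hL : (∑ i, (K i)ᴴ * K i).IsHermitian)
    (f : Matrix (Fin χ) (Fin χ) ℂ)
    (hf : f = hL.cfc (fun x => if x ≤ t * δ then 0 else Real.sqrt (1 - t * δ / x)))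
    (hfne : f ≠ 0) :
    (∑ i, K i * (f * f) * (K i)ᴴ).PosDef := by
  have hfH : f.IsHermitian := by
    rw [hf, ← hL.cfc_eq]
    exact IsSelfAdjoint.cfc.isHermitian
  simpa only [hfH.eq] using posDef_sum_mul_mul_conjTranspose_of_span_eq_top hspan hfne

/-- If `K^1, ..., K^d` span `M_χ(ℂ)` and `f = f_{t,δ}(L(K))` is a nonzero
(positive semidefinite) matrix, then `R = Σ_i K^i f² (K^i)*` is positive definite. -/
theorem stmt_10 (d χ : ℕ) (K : Fin d → Matrix (Fin χ) (Fin χ) ℂ)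
    (hspan : Submodule.span ℂ (Set.range K) = ⊤)
    (t δ : ℝ) (ht0 : 0 ≤ t) (ht1 : t ≤ 1) (hδ : 0 ≤ δ)
    (hL : (∑ i, (K i)ᴴ * K i).IsHermitian)
    (f : Matrix (Fin χ) (Fin χ) ℂ)
    (hf : f = hL.cfc (fun x => if x ≤ t * δ then 0 else Real.sqrt (1 - t * δ / x)))
    (hfne : f ≠ 0) :
    (∑ i, K i * (f * f) * (K i)ᴴ).PosDef :=
  stmt_10_general d χ K hspan t δ hL f hf hfne
end

section
/- Let p: E → B be a fiber bundle whose fiber F is path-connected, where E and B are obtained as sequential colimits along closed embeddings of spaces on which p restricts to Hurewicz fibrations. Then p has the homotopy lifting property with respect to all compact spaces; in particular p is a Serre fibration. -/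
/-!
A compact subset `K` of a sequential colimit of `T₁` spaces lies in some stage: otherwise pick
`x n ∈ K \ Aₙ`; the set of these points meets every stage in a finite, hence closed, set, and so do
all its subsets. By the colimit topology the set is then closed and discrete, hence finite inside `K`,
and a finite set does lie in a stage. Consequently a homotopy of a compact space into `B`, together
with its initial lift into `E`, factors through a common stage `Bₙ`, `Eₙ`, where the Hurewicz
fibration `Eₙ → Bₙ` lifts it.
-/

open unitInterval

/-- `p` has the homotopy lifting property with respect to `Z`. -/
def HasHLP {E B : Type} [TopologicalSpace E] [TopologicalSpace B] (p : E → B)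
    (Z : Type) [TopologicalSpace Z] : Prop :=
  ∀ (H : C(Z × I, B)) (h₀ : C(Z, E)), (∀ z, p (h₀ z) = H (z, 0)) →
    ∃ H' : C(Z × I, E), (∀ z, H' (z, 0) = h₀ z) ∧ ∀ q, p (H' q) = H q

open Set

theorem Monotone.exists_subset_of_finite {X : Type*} {A : ℕ → Set X} (hmono : Monotone A)
    (hunion : ⋃ n, A n = univ) {S : Set X} (hS : S.Finite) : ∃ n, S ⊆ A n := by
  simpa using hmono.directed_le.exists_mem_subset_of_finset_subset_biUnion
    (s := hS.toFinset) (by simp [hunion])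

section SequentialColimit

variable {X : Type*} [TopologicalSpace X]

theorem isClosed_of_forall_finite_inter {ι : Type*} {A : ι → Set X}
    (hT1 : ∀ i, T1Space (A i))
    (hfinal : ∀ C : Set X, (∀ i, IsClosed ((Subtype.val : A i → X) ⁻¹' C)) → IsClosed C)
    {S : Set X} (hS : ∀ i, (S ∩ A i).Finite) : IsClosed S :=
  hfinal S fun i =>
    (((hS i).preimage Subtype.val_injective.injOn).subset fun x hx => ⟨hx, x.2⟩).isClosed

theorem Monotone.exists_subset_of_isCompact {A : ℕ → Set X} (hmono : Monotone A)
    (hunion : ⋃ n, A n = univ) (hT1 : ∀ n, T1Space (A n))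
    (hfinal : ∀ C : Set X, (∀ n, IsClosed ((Subtype.val : A n → X) ⁻¹' C)) → IsClosed C)
    {K : Set X} (hK : IsCompact K) : ∃ n, K ⊆ A n := by
  by_contra! hK_large
  choose x hxK hxA using fun n => not_subset.1 (hK_large n)
  have hclosed : ∀ T ⊆ range x, IsClosed T := by
    refine fun T hT => isClosed_of_forall_finite_inter hT1 hfinal fun n => ?_
    refine ((finite_Iio n).image x).subset ?_
    rintro _ ⟨hkT, hkA⟩
    obtain ⟨k, rfl⟩ := hT hkT
    exact ⟨k, lt_of_not_ge fun hnk => hxA k (hmono hnk hkA), rfl⟩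
  have hdiscrete : IsDiscrete (range x) :=
    isDiscrete_iff_forall_mem_exists_isClosed.2 fun T hT => ⟨T, hclosed T hT, inter_eq_left.2 hT⟩
  have hfinite : (range x).Finite :=
    (hK.of_isClosed_subset (hclosed _ subset_rfl) (range_subset_iff.2 hxK)).finite hdiscrete
  obtain ⟨n, hn⟩ := hmono.exists_subset_of_finite hunion hfinite
  exact hxA n (hn (mem_range_self n))

end SequentialColimit

theorem HasHLP.exists_lift_of_forall_mem {E B Z : Type} [TopologicalSpace E] [TopologicalSpace B]
    [TopologicalSpace Z] {p : E → B} {E' : Set E} {B' : Set B} {hmaps : MapsTo p E' B'}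
    (hfib : HasHLP (hmaps.restrict p E' B') Z) (H : C(Z × I, B)) (h₀ : C(Z, E))
    (hcompat : ∀ z, p (h₀ z) = H (z, 0)) (hH : ∀ q, H q ∈ B') (hh₀ : ∀ z, h₀ z ∈ E') :
    ∃ H' : C(Z × I, E), (∀ z, H' (z, 0) = h₀ z) ∧ ∀ q, p (H' q) = H q := by
  obtain ⟨H', hH'₀, hpH'⟩ :=
    hfib ⟨fun q => ⟨H q, hH q⟩, H.continuous.subtype_mk _⟩
      ⟨fun z => ⟨h₀ z, hh₀ z⟩, h₀.continuous.subtype_mk _⟩ fun z => Subtype.ext (hcompat z)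
  exact ⟨⟨fun q => H' q, continuous_subtype_val.comp H'.continuous⟩,
    fun z => congrArg Subtype.val (hH'₀ z), fun q => congrArg Subtype.val (hpH' q)⟩

theorem stmt_15_general {E B : Type} [TopologicalSpace E] [TopologicalSpace B]
    (En : ℕ → Set E) (Bn : ℕ → Set B)
    (hEmono : Monotone En) (hBmono : Monotone Bn)
    (hEunion : ⋃ n, En n = Set.univ) (hBunion : ⋃ n, Bn n = Set.univ)
    (hET1 : ∀ n, T1Space (En n)) (hBT1 : ∀ n, T1Space (Bn n))
    (hEfinal : ∀ C : Set E, (∀ n, IsClosed ((Subtype.val : En n → E) ⁻¹' C)) → IsClosed C)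
    (hBfinal : ∀ C : Set B, (∀ n, IsClosed ((Subtype.val : Bn n → B) ⁻¹' C)) → IsClosed C)
    (p : E → B)
    (hmaps : ∀ n, Set.MapsTo p (En n) (Bn n))
    (hfib : ∀ n, ∀ (Z : Type) [TopologicalSpace Z],
      HasHLP (Set.MapsTo.restrict p (En n) (Bn n) (hmaps n)) Z) :
    ∀ (Z : Type) [TopologicalSpace Z] [CompactSpace Z], HasHLP p Z := by
  intro Z _ _ H h₀ hcompat
  obtain ⟨m, hm⟩ := hEmono.exists_subset_of_isCompact hEunion hET1 hEfinal
    (isCompact_range h₀.continuous)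
  obtain ⟨n, hn⟩ := hBmono.exists_subset_of_isCompact hBunion hBT1 hBfinal
    (isCompact_range H.continuous)
  exact (hfib (max m n) Z).exists_lift_of_forall_mem H h₀ hcompat
    (fun q => hBmono (le_max_right m n) (hn (mem_range_self q)))
    (fun z => hEmono (le_max_left m n) (hm (mem_range_self z)))

/-- If `E` and `B` are sequential colimits of increasing sequences of closed `T₁`
subspaces along which the continuous map `p : E → B` restricts to Hurewicz fibrations, then `p`
has the homotopy lifting property with respect to all compact spaces (in particular, `p` is a
Serre fibration). -/
theorem stmt_15 {E B : Type} [TopologicalSpace E] [TopologicalSpace B]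
    (En : ℕ → Set E) (Bn : ℕ → Set B)
    (hEmono : Monotone En) (hBmono : Monotone Bn)
    (hEclosed : ∀ n, IsClosed (En n)) (hBclosed : ∀ n, IsClosed (Bn n))
    (hEunion : ⋃ n, En n = Set.univ) (hBunion : ⋃ n, Bn n = Set.univ)
    (hET1 : ∀ n, T1Space (En n)) (hBT1 : ∀ n, T1Space (Bn n))
    (hEfinal : ∀ C : Set E, (∀ n, IsClosed ((Subtype.val : En n → E) ⁻¹' C)) → IsClosed C)
    (hBfinal : ∀ C : Set B, (∀ n, IsClosed ((Subtype.val : Bn n → B) ⁻¹' C)) → IsClosed C)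
    (p : E → B) (hp : Continuous p)
    (hmaps : ∀ n, Set.MapsTo p (En n) (Bn n))
    (hfib : ∀ n, ∀ (Z : Type) [TopologicalSpace Z],
      HasHLP (Set.MapsTo.restrict p (En n) (Bn n) (hmaps n)) Z) :
    ∀ (Z : Type) [TopologicalSpace Z] [CompactSpace Z], HasHLP p Z :=
  stmt_15_general En Bn hEmono hBmono hEunion hBunion hET1 hBT1 hEfinal hBfinal p hmaps hfib
end

section
/- Let X be a topological space that is the colimit of an increasing sequence of T₁ subspaces X₁ ⊂ X₂ ⊂ ⋯ (X carries the final topology). If A ⊂ X is compactly generated in the subspace topology, then the subspace topology on A coincides with the final topology induced by the inclusions A ∩ X_n ↪ A (each A ∩ X_n with the subspace topology from X). -/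
/-!
A compact subset `S` of `X` lies in some `Xₙ`: otherwise pick `xₙ ∈ S \ Xₙ`. By monotonicity
every subset of `{xₙ}` meets each `Xₙ` in a finite, hence (`T₁`) closed set, so it is closed in
`X`. An accumulation point of `{xₙ}` in `S` is then impossible, so `{xₙ}` is finite and lies in
some `Xₘ`, contradicting `xₘ ∉ Xₘ`. Consequently every continuous map from a compact space into
`A` factors through some `A ∩ Xₙ`, and compact generation of `A` does the rest.
-/

open Set Topology

section ColimitOfSubspaces

variable {X : Type*} {Xn : ℕ → Set X}

lemma Set.Finite.exists_subset_of_monotone_of_iUnion_eq_univ (hmono : Monotone Xn)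
    (hunion : ⋃ n, Xn n = univ) {S : Set X} (hS : S.Finite) : ∃ n, S ⊆ Xn n := by
  simpa using hmono.directed_le.exists_mem_subset_of_finset_subset_biUnion
    (s := hS.toFinset) (by simp [hunion])

variable [TopologicalSpace X]

lemma isClosed_of_forall_inter_finite (hT1 : ∀ n, T1Space (Xn n))
    (hfinal : ∀ C : Set X, IsClosed C ↔ ∀ n, IsClosed ((Subtype.val : Xn n → X) ⁻¹' C))
    {T : Set X} (hT : ∀ n, (T ∩ Xn n).Finite) : IsClosed T := by
  refine (hfinal T).2 fun n => ?_
  have hfin : ((Subtype.val : Xn n → X) ⁻¹' T).Finite :=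
    ((hT n).preimage Subtype.val_injective.injOn).subset fun y hy => ⟨hy, y.2⟩
  exact hfin.isClosed

lemma IsCompact.exists_subset_of_monotone_of_isClosed_iff (hmono : Monotone Xn)
    (hT1 : ∀ n, T1Space (Xn n)) (hunion : ⋃ n, Xn n = univ)
    (hfinal : ∀ C : Set X, IsClosed C ↔ ∀ n, IsClosed ((Subtype.val : Xn n → X) ⁻¹' C))
    {S : Set X} (hS : IsCompact S) : ∃ n, S ⊆ Xn n := by
  by_contra! h
  choose x hxS hxn using fun n => not_subset.mp (h n)
  have hsub_closed : ∀ T ⊆ range x, IsClosed T := by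
    refine fun T hT => isClosed_of_forall_inter_finite hT1 hfinal fun n => ?_
    refine ((finite_Iio n).image x).subset ?_
    rintro _ ⟨hyT, hyn⟩
    obtain ⟨k, rfl⟩ := hT hyT
    exact ⟨k, lt_of_not_ge fun hnk => hxn k (hmono hnk hyn), rfl⟩
  have hinf : (range x).Infinite := fun hfin => by
    obtain ⟨m, hm⟩ := hfin.exists_subset_of_monotone_of_iUnion_eq_univ hmono hunion
    exact hxn m (hm ⟨m, rfl⟩)
  obtain ⟨p, -, hp⟩ := hinf.exists_accPt_of_subset_isCompact hS (range_subset_iff.2 hxS)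
  have hnhds : (range x \ {p})ᶜ ∈ 𝓝 p :=
    (hsub_closed _ sdiff_subset).isOpen_compl.mem_nhds fun hp' => hp'.2 rfl
  obtain ⟨y, ⟨hyU, hyx⟩, hyp⟩ := accPt_iff_nhds.1 hp _ hnhds
  exact hyU ⟨hyx, hyp⟩

end ColimitOfSubspaces

/-- If `X` carries the final topology of an increasing sequence of `T₁`
subspaces `Xₙ` and `A ⊆ X` is compactly generated in the subspace topology, then the subspace
topology on `A` coincides with the final topology induced by the inclusions `A ∩ Xₙ ↪ A`. -/
theorem stmt_16 {X : Type} [TopologicalSpace X]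
    (Xn : ℕ → Set X) (hmono : Monotone Xn)
    (hT1 : ∀ n, T1Space (Xn n))
    (hunion : ⋃ n, Xn n = Set.univ)
    (hfinal : ∀ C : Set X,
      IsClosed C ↔ ∀ n, IsClosed ((Subtype.val : Xn n → X) ⁻¹' C))
    (A : Set X)
    (hcg : ∀ C : Set A,
      (∀ (K : Type) [TopologicalSpace K] [CompactSpace K] [T2Space K]
        (f : K → A), Continuous f → IsClosed (f ⁻¹' C)) → IsClosed C)
    (C : Set A) :
    IsClosed C ↔
      ∀ n, IsClosed ((fun x : ↥(A ∩ Xn n) => (⟨x.1, x.2.1⟩ : A)) ⁻¹' C) := by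
  refine ⟨fun hC n => hC.preimage (continuous_subtype_val.subtype_mk _), fun h => ?_⟩
  refine hcg C fun K _ _ _ f hf => ?_
  have hcont : Continuous ((↑) ∘ f : K → X) := continuous_subtype_val.comp hf
  obtain ⟨n, hn⟩ := (isCompact_range hcont).exists_subset_of_monotone_of_isClosed_iff
    hmono hT1 hunion hfinal
  let g : K → ↥(A ∩ Xn n) := fun k => ⟨f k, (f k).2, hn ⟨k, rfl⟩⟩
  exact (h n).preimage (hcont.subtype_mk _ : Continuous g)
end

section
/- Let K ∈ M_2(ℂ)^4 be the family K(g) defined by K^1(g) = sqrt(1−g²)·1, K^2(g) = sqrt(2/3)·g·E_{12}, K^3(g) = sqrt(1/3)·g·diag(−1,1), K^4(g) = −sqrt(2/3)·g·E_{21}, for g ∈ (0,1). Then the map 𝔼_1(B) = Σ_i K^i(g)* B K^i(g) is self-adjoint with spectrum {1, 1 − (4/3)g²}, where the eigenvalue 1 − (4/3)g² has multiplicity three, and its unique positive, invertible, trace-one fixed point is T = (1/2)·1. -/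
/-!
With `p = 1 - (4/3) g²`, the Kraus sum collapses to the depolarizing map
`B ↦ p • B + ((1 - p) / 2) (tr B) • 1`. Such a map fixes `1` and acts as `p` on traceless
matrices, so its spectrum is `{1, p}`, its `p`-eigenspace is the kernel of the trace (of dimension
`2² - 1`), it is Hilbert–Schmidt self-adjoint because `p` is real, and for `p ≠ 1` its fixed
points are the multiples of `1`.
-/

open Matrix ComplexOrder

/-- The interpolating family of MPS tensors between a product state (`g = 0`) and the AKLT
state (`g = 1`). -/
noncomputable def Kg (g : ℝ) : Fin 4 → Matrix (Fin 2) (Fin 2) ℂ :=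
  ![((Real.sqrt (1 - g ^ 2) : ℝ) : ℂ) • 1,
    ((Real.sqrt (2 / 3) * g : ℝ) : ℂ) • !![0, 1; 0, 0],
    ((Real.sqrt (1 / 3) * g : ℝ) : ℂ) • !![-1, 0; 0, 1],
    (-(Real.sqrt (2 / 3) * g : ℝ) : ℂ) • !![0, 0; 1, 0]]

namespace Matrix

variable {n K : Type*} [Fintype n] [DecidableEq n] [Field K]

def depolarizing (p : K) : Module.End K (Matrix n n K) :=
  p • LinearMap.id + ((1 - p) / Fintype.card n) • (traceLinearMap n K K).smulRight 1

theorem depolarizing_apply (p : K) (B : Matrix n n K) :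
    depolarizing p B = p • B + ((1 - p) / Fintype.card n * trace B) • 1 := by
  simp [depolarizing, mul_smul]

theorem depolarizing_apply_of_trace_eq_zero (p : K) {B : Matrix n n K} (hB : trace B = 0) :
    depolarizing p B = p • B := by
  simp [depolarizing_apply, hB]

theorem trace_conjTranspose_depolarizing_mul [StarRing K] {p : K} (hp : star p = p)
    (A B : Matrix n n K) :
    trace ((depolarizing p A)ᴴ * B) = trace (Aᴴ * depolarizing p B) := by
  have hc : star ((1 - p) / Fintype.card n) = (1 - p) / Fintype.card n := by
    rw [star_div₀, star_sub, star_one, star_natCast, hp]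
  simp only [depolarizing_apply, conjTranspose_add, conjTranspose_smul, conjTranspose_one,
    add_mul, mul_add, Matrix.smul_mul, Matrix.mul_smul, one_mul, mul_one, trace_add, trace_smul,
    trace_conjTranspose, star_mul', hc, hp, smul_eq_mul]
  ring

variable [CharZero K] [Nonempty n]

theorem trace_depolarizing (p : K) (B : Matrix n n K) :
    trace (depolarizing p B) = trace B := by
  have : (Fintype.card n : K) ≠ 0 := by simp
  rw [depolarizing_apply, trace_add, trace_smul, trace_smul, trace_one, smul_eq_mul,
    smul_eq_mul]
  field_simp
  ring

theorem depolarizing_one (p : K) : depolarizing p (1 : Matrix n n K) = 1 := by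
  have : (Fintype.card n : K) ≠ 0 := by simp
  rw [depolarizing_apply, trace_one, ← add_smul]
  field_simp
  simp

theorem depolarizing_eq_self_iff {p : K} (hp : p ≠ 1) {S : Matrix n n K} :
    depolarizing p S = S ↔ S = (trace S / Fintype.card n) • 1 := by
  have h1p : 1 - p ≠ 0 := sub_ne_zero.2 hp.symm
  rw [depolarizing_apply]
  generalize trace S = t
  constructor
  · intro h
    refine smul_right_injective _ h1p ?_
    linear_combination (norm := module) -h
  · rintro rfl
    module

theorem hasEigenvalue_depolarizing_iff (hn : 1 < Fintype.card n) (p μ : K) :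
    Module.End.HasEigenvalue (depolarizing p : Module.End K (Matrix n n K)) μ ↔ μ = 1 ∨ μ = p := by
  constructor
  · intro h
    obtain ⟨B, hB⟩ := h.exists_hasEigenvector
    have hμ : depolarizing p B = μ • B := hB.apply_eq_smul
    by_cases htr : trace B = 0
    · rw [depolarizing_apply_of_trace_eq_zero p htr] at hμ
      exact Or.inr (smul_left_injective K hB.2 hμ).symm
    · have := congrArg trace hμ
      rw [trace_depolarizing, trace_smul, smul_eq_mul] at this
      exact Or.inl (mul_right_cancel₀ htr (by rw [one_mul, ← this]))
  · obtain ⟨i, j, hij⟩ := Fintype.exists_pair_of_one_lt_card hn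
    rintro (rfl | rfl)
    · refine Module.End.hasEigenvalue_of_hasEigenvector (x := (1 : Matrix n n K)) ⟨?_, one_ne_zero⟩
      rw [Module.End.mem_eigenspace_iff, depolarizing_one, one_smul]
    · refine Module.End.hasEigenvalue_of_hasEigenvector (x := single i j (1 : K)) ⟨?_, ?_⟩
      · exact Module.End.mem_eigenspace_iff.2
          (depolarizing_apply_of_trace_eq_zero μ (trace_single_eq_of_ne i j 1 hij))
      · exact fun h => one_ne_zero (α := K) (by simpa using congrFun₂ h i j)

theorem spectrum_depolarizing (hn : 1 < Fintype.card n) (p : K) :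
    spectrum K (depolarizing p : Module.End K (Matrix n n K)) = {1, p} := by
  ext μ
  rw [← Module.End.hasEigenvalue_iff_mem_spectrum, hasEigenvalue_depolarizing_iff hn]
  rfl

theorem eigenspace_depolarizing {p : K} (hp : p ≠ 1) :
    Module.End.eigenspace (depolarizing p : Module.End K (Matrix n n K)) p
      = LinearMap.ker (traceLinearMap n K K) := by
  ext B
  rw [Module.End.mem_eigenspace_iff, LinearMap.mem_ker, traceLinearMap_apply]
  refine ⟨fun h => ?_, depolarizing_apply_of_trace_eq_zero p⟩
  have htr := congrArg trace h
  rw [trace_depolarizing, trace_smul, smul_eq_mul] at htr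
  exact (mul_eq_zero.1 (by linear_combination htr : (1 - p) * trace B = 0)).resolve_left
    (sub_ne_zero.2 hp.symm)

theorem finrank_eigenspace_depolarizing {p : K} (hp : p ≠ 1) :
    Module.finrank K (Module.End.eigenspace (depolarizing p : Module.End K (Matrix n n K)) p)
      = Fintype.card n * Fintype.card n - 1 := by
  have := (traceLinearMap n K K).finrank_range_add_finrank_ker
  rw [LinearMap.range_eq_top.2 (trace_surjective (R := K) (n := n)), finrank_top,
    Module.finrank_self, Module.finrank_matrix] at this
  rw [eigenspace_depolarizing hp]
  simp only [Module.finrank_self, mul_one] at this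
  omega

end Matrix

theorem transferMap_Kg_eq_depolarizing {g : ℝ} (hg : g ^ 2 ≤ 1) :
    ∑ i, (LinearMap.mulLeft ℂ ((Kg g i)ᴴ)).comp (LinearMap.mulRight ℂ (Kg g i))
      = depolarizing (1 - 4 / 3 * (g : ℂ) ^ 2) := by
  have sqrt_sq {x : ℝ} (hx : 0 ≤ x) : ((√x : ℝ) : ℂ) ^ 2 = x := by
    rw [← Complex.ofReal_pow, Real.sq_sqrt hx]
  have h1 := sqrt_sq (sub_nonneg.2 hg)
  have h2 := sqrt_sq (show (0 : ℝ) ≤ 2 / 3 by norm_num)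
  have h3 := sqrt_sq (show (0 : ℝ) ≤ 1 / 3 by norm_num)
  ext1 B
  simp only [Fin.sum_univ_four, LinearMap.add_apply, LinearMap.comp_apply,
    LinearMap.mulLeft_apply, LinearMap.mulRight_apply, Kg, Matrix.cons_val, depolarizing_apply,
    conjTranspose_smul, Complex.star_def, Complex.ofReal_mul, map_mul, map_neg, Complex.conj_ofReal]
  push_cast at h1 h2 h3
  generalize ((√(1 - g ^ 2) : ℝ) : ℂ) = a at h1 ⊢
  generalize ((√(2 / 3) : ℝ) : ℂ) = b at h2 ⊢
  generalize ((√(1 / 3) : ℝ) : ℂ) = c at h3 ⊢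
  ext i j
  fin_cases i <;> fin_cases j <;> simp [Matrix.mul_apply, trace_fin_two]
  · linear_combination B 0 0 * h1 + g ^ 2 * B 0 0 * h3 + g ^ 2 * B 1 1 * h2
  · linear_combination B 0 1 * h1 - g ^ 2 * B 0 1 * h3
  · linear_combination B 1 0 * h1 - g ^ 2 * B 1 0 * h3
  · linear_combination B 1 1 * h1 + g ^ 2 * B 1 1 * h3 + g ^ 2 * B 0 0 * h2

/-- the transfer map `𝔼₁(B) = Σ_i K^i(g)* B K^i(g)` is self-adjoint for the
Hilbert–Schmidt inner product, has spectrum `{1, 1 − (4/3)g²}` with the eigenvalue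
`1 − (4/3)g²` triply degenerate, and its unique positive invertible trace-one fixed point is
`(1/2)·1`. -/
theorem stmt_17 (g : ℝ) (hg : g ∈ Set.Ioo (0 : ℝ) 1)
    (T : Matrix (Fin 2) (Fin 2) ℂ →ₗ[ℂ] Matrix (Fin 2) (Fin 2) ℂ)
    (hT : T = ∑ i, (LinearMap.mulLeft ℂ ((Kg g i)ᴴ)).comp (LinearMap.mulRight ℂ (Kg g i))) :
    (∀ A B : Matrix (Fin 2) (Fin 2) ℂ, ((T A)ᴴ * B).trace = (Aᴴ * T B).trace) ∧
    spectrum ℂ (T : Module.End ℂ (Matrix (Fin 2) (Fin 2) ℂ))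
      = {1, 1 - (4 / 3) * (g : ℂ) ^ 2} ∧
    Module.finrank ℂ
      (Module.End.eigenspace (T : Module.End ℂ (Matrix (Fin 2) (Fin 2) ℂ))
        (1 - (4 / 3) * (g : ℂ) ^ 2)) = 3 ∧
    T ((1 / 2 : ℂ) • 1) = (1 / 2 : ℂ) • 1 ∧
    (∀ S : Matrix (Fin 2) (Fin 2) ℂ, S.PosDef → S.trace = 1 → T S = S →
      S = (1 / 2 : ℂ) • 1) := by
  obtain ⟨hg0, hg1⟩ := hg
  have hp : 1 - 4 / 3 * (g : ℂ) ^ 2 ≠ 1 := by simp [sub_eq_self, hg0.ne']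
  rw [transferMap_Kg_eq_depolarizing (by nlinarith)] at hT
  subst hT
  refine ⟨trace_conjTranspose_depolarizing_mul (by simp [Complex.conj_ofReal]),
    spectrum_depolarizing (by simp) _, ?_, by rw [map_smul, depolarizing_one], fun S _ htr hS => ?_⟩
  · simp [finrank_eigenspace_depolarizing hp]
  · rw [(depolarizing_eq_self_iff hp).1 hS, htr]
    simp
end

section
/- Let D' > D ≥ χ, let L be a χ×χ-bond-dimension injective MPS tensor (d-tuple of χ×χ matrices spanning M_χ(ℂ)), let Y ∈ U(D') be written in 3×3 block form with blocks of sizes χ, D−χ, D'−D, and suppose the last D'−D columns of Y·[[L,0,0],[N₁,0,0],[N₂,0,0]]·Y* are zero (for some matrices N₁, N₂). Then the bottom-left block Y₃₁ of Y is zero. -/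
open Matrix

/-! The column of `Yᴴ` indexed by a row of the `Y₃₁` block is killed by every `L i`: conjugating
back by the unitary `Y`, the vanishing last columns of `Y M Yᴴ` become vanishing last columns of
`M Yᴴ`, whose top part is `L i` applied to that column. Since the `L i` span the full matrix
algebra, the identity kills it as well, so the column, i.e. the conjugate of a row of `Y₃₁`, is
zero. -/

namespace Matrix

theorem eq_zero_of_forall_mulVec_eq_zero {n R ι : Type*} [Fintype n] [DecidableEq n]
    [CommSemiring R] {L : ι → Matrix n n R} (hspan : Submodule.span R (Set.range L) = ⊤)
    {v : n → R} (hv : ∀ i, L i *ᵥ v = 0) : v = 0 := by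
  have hker : (mulVecBilin R R).flip v = 0 := LinearMap.ext_on_range hspan hv
  simpa using LinearMap.congr_fun hker 1

theorem mul_apply_eq_zero_of_forall_apply_eq_zero {m n o α : Type*} [Fintype n]
    [NonUnitalNonAssocSemiring α] (A : Matrix m n α) {B : Matrix n o α} {j : o}
    (hB : ∀ k, B k j = 0) (i : m) : (A * B) i j = 0 :=
  Finset.sum_eq_zero fun k _ => by simp [hB]

theorem fromBlocks_zero_mul_apply_inl {l l' m m' o α : Type*} [Fintype l'] [Fintype m']
    [NonUnitalNonAssocSemiring α] (A : Matrix l l' α) (C : Matrix m l' α)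
    (X : Matrix (l' ⊕ m') o α) (p : l) (j : o) :
    (fromBlocks A 0 C (0 : Matrix m m' α) * X) (Sum.inl p) j =
      (A *ᵥ fun q => X (Sum.inl q) j) p := by
  simp [mul_apply, mulVec, dotProduct, Fintype.sum_sum_type]

end Matrix

/-- If `Y ∈ U(D')` in 3×3 block form (blocks of sizes `χ`, `D−χ`, `D'−D`) and the
last `D'−D` columns of each `Y [[L,0,0],[N₁,0,0],[N₂,0,0]] Y*` vanish, where the `L^i` span
`M_χ(ℂ)`, then the bottom-left block `Y₃₁` of `Y` is zero. -/
theorem stmt_19 (d χ a b : ℕ)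
    (L : Fin d → Matrix (Fin χ) (Fin χ) ℂ)
    (hspan : Submodule.span ℂ (Set.range L) = ⊤)
    (N₁ : Fin d → Matrix (Fin a) (Fin χ) ℂ)
    (N₂ : Fin d → Matrix (Fin b) (Fin χ) ℂ)
    (Y : Matrix (Fin χ ⊕ (Fin a ⊕ Fin b)) (Fin χ ⊕ (Fin a ⊕ Fin b)) ℂ)
    (hY : Y ∈ Matrix.unitaryGroup (Fin χ ⊕ (Fin a ⊕ Fin b)) ℂ)
    (hzero : ∀ (i : Fin d) (r : Fin χ ⊕ (Fin a ⊕ Fin b)) (c : Fin b),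
      (Y * Matrix.fromBlocks (L i) (0 : Matrix (Fin χ) (Fin a ⊕ Fin b) ℂ) (Matrix.fromRows (N₁ i) (N₂ i)) (0 : Matrix (Fin a ⊕ Fin b) (Fin a ⊕ Fin b) ℂ) * Yᴴ)
        r (Sum.inr (Sum.inr c)) = 0) :
    ∀ (r : Fin b) (c : Fin χ), Y (Sum.inr (Sum.inr r)) (Sum.inl c) = 0 := by
  intro r c
  have hYY : Yᴴ * Y = 1 := mem_unitaryGroup_iff'.mp hY
  have hker : ∀ i, L i *ᵥ (fun q => Yᴴ (Sum.inl q) (Sum.inr (Sum.inr r))) = 0 := by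
    intro i
    funext p
    rw [← fromBlocks_zero_mul_apply_inl (L i) (fromRows (N₁ i) (N₂ i)),
      ← one_mul (fromBlocks _ _ _ _), ← hYY, mul_assoc, mul_assoc, ← mul_assoc Y]
    exact mul_apply_eq_zero_of_forall_apply_eq_zero _ (hzero i · r) _
  have hcol := congr_fun (eq_zero_of_forall_mulVec_eq_zero hspan hker) c
  simpa [conjTranspose_apply] using hcol
end
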